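/- For all k ≥ s ≥ 2, every k-globally branch surviving function is s-globally branch surviving: if f : ℕ → ℕ is not a path through any computable k-branching subtree of ω^{<ω}, then f is not a path through any computable s-branching subtree of ω^{<ω}. -/

import Mathlib

/-! Basic notions: subtrees of `X^{<ω}`, `k`-branching trees, `k`-trees, paths,
computable trees, relative computability (oracle machines), surviving functions,
and computable traceability. -/

/-- A subtree of `X^{<ω}`: a set of finite strings closed under initial segments. -/
def IsSubtree {X : Type*} (T : Set (List X)) : Prop :=
  ∀ σ ∈ T, ∀ τ : List X, τ <+: σ → τ ∈ T

/-- The set of immediate successors of the node `σ` in the tree `T`. -/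
def succSet {X : Type*} (T : Set (List X)) (σ : List X) : Set X :=
  {x | σ ++ [x] ∈ T}

/-- A `k`-branching tree: a subtree in which every node has either exactly `1`
or exactly `k` immediate successors. -/
def IsBranchingTree {X : Type*} (k : ℕ) (T : Set (List X)) : Prop :=
  IsSubtree T ∧ ∀ σ ∈ T, (succSet T σ).ncard = 1 ∨ (succSet T σ).ncard = k

/-- A `k`-tree: a subtree in which every node has at least `1` and at most `k`
immediate successors. -/
def IsKTree {X : Type*} (k : ℕ) (T : Set (List X)) : Prop :=
  IsSubtree T ∧ ∀ σ ∈ T, 1 ≤ (succSet T σ).ncard ∧ (succSet T σ).ncard ≤ k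

/-- `f` is a path through `T`: every finite initial segment of `f` belongs to `T`. -/
def IsPathThrough {X : Type*} (f : ℕ → X) (T : Set (List X)) : Prop :=
  ∀ n : ℕ, (List.range n).map f ∈ T

/-- A tree is computable when membership is decidable by an algorithm. -/
def ComputableTree {X : Type*} [Primcodable X] (T : Set (List X)) : Prop :=
  ComputablePred (· ∈ T)

/-- Partial functions `ℕ →. ℕ` which are partial recursive relative to the oracle `O`
(the relativization of `Nat.Partrec`). -/
inductive OracleRecursiveIn (O : ℕ → ℕ) : (ℕ →. ℕ) → Prop
  | oracle : OracleRecursiveIn O (fun n => Part.some (O n))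
  | zero : OracleRecursiveIn O (pure 0)
  | succ : OracleRecursiveIn O ↑Nat.succ
  | left : OracleRecursiveIn O ↑fun n : ℕ => n.unpair.1
  | right : OracleRecursiveIn O ↑fun n : ℕ => n.unpair.2
  | pair {f g} : OracleRecursiveIn O f → OracleRecursiveIn O g →
      OracleRecursiveIn O fun n => Nat.pair <$> f n <*> g n
  | comp {f g} : OracleRecursiveIn O f → OracleRecursiveIn O g →
      OracleRecursiveIn O fun n => g n >>= f
  | prec {f g} : OracleRecursiveIn O f → OracleRecursiveIn O g →
      OracleRecursiveIn O (Nat.unpaired fun a n =>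
        n.rec (f a) fun y IH => do let i ← IH; g (Nat.pair a (Nat.pair y i)))
  | rfind {f} : OracleRecursiveIn O f →
      OracleRecursiveIn O fun a => Nat.rfind fun n => (fun m => m = 0) <$> f (Nat.pair a n)

/-- A total function between `Primcodable` types is computable relative to the oracle `O`. -/
def OracleComputableIn (O : ℕ → ℕ) {α σ : Type*} [Primcodable α] [Primcodable σ] (f : α → σ) : Prop :=
  OracleRecursiveIn O fun n =>
    Part.bind ((Encodable.decode (α := α) n) : Part α) fun a =>
      Part.some (Encodable.encode (f a))

/-- For `k ≥ 2`, `f : ℕ → Fin (k+1)` is `k`-surviving if it is not a path through any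
computable `k`-branching subtree of `(k+1)^{<ω}`. -/
def KSurviving (k : ℕ) (f : ℕ → Fin (k + 1)) : Prop :=
  ∀ T : Set (List (Fin (k + 1))),
    IsBranchingTree k T → ComputableTree T → ¬ IsPathThrough f T

/-- The degree of the oracle `O` is computably traceable: there is a computable bound `h`
such that every total `f : ℕ → ℕ` computable in `O` admits a computable trace. -/
def ComputablyTraceableDeg (O : ℕ → ℕ) : Prop :=
  ∃ h : ℕ → ℕ, Computable h ∧
    ∀ f : ℕ → ℕ, OracleComputableIn O f →
      ∃ S : ℕ → Finset ℕ,
        (∃ L : ℕ → List ℕ, Computable L ∧ ∀ n, (L n).toFinset = S n) ∧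
        ∀ n, (S n).card ≤ h n ∧ f n ∈ S n


/-! Given a computable `s`-branching tree `T` through which `f` passes, enlarge it to a computable
`k`-branching tree: every node of `T` with `s` children receives `k - s` new children outside `T`,
each continued only by zeros, and nodes with one child are left alone. The new children of `σ` are
the first `k - s` numbers that are not children of `σ` but exceed two of its children. This set is
decidable uniformly in `σ` although the number of children of `σ` is not, and it is empty exactly
when `σ` has a single child. -/

namespace Set

variable (P S : Set ℕ) [DecidablePred (· ∈ P)] [DecidablePred (· ∈ S)] (m : ℕ)

def firstElems : Set ℕ := {y | y ∈ P ∧ Nat.count (· ∈ P) y < m}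

def gapsAboveSecond : Set ℕ := {y | y ∉ S ∧ 2 ≤ Nat.count (· ∈ S) y}

instance : DecidablePred (· ∈ firstElems P m) := fun _ => inferInstanceAs (Decidable (_ ∧ _))

instance : DecidablePred (· ∈ gapsAboveSecond S) := fun _ => inferInstanceAs (Decidable (_ ∧ _))

variable {P S m}

theorem firstElems_subset : firstElems P m ⊆ P := fun _ hy => hy.1

theorem firstElems_eq_image_nth (hP : P.Infinite) :
    firstElems P m = Nat.nth (· ∈ P) '' Iio m := by
  ext y
  constructor
  · rintro ⟨hy, hym⟩
    exact ⟨_, hym, Nat.nth_count hy⟩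
  · rintro ⟨i, hi, rfl⟩
    exact ⟨Nat.nth_mem_of_infinite hP i, by rwa [Nat.count_nth_of_infinite (p := (· ∈ P)) hP]⟩

theorem Infinite.finite_firstElems (hP : P.Infinite) : (firstElems P m).Finite := by
  rw [firstElems_eq_image_nth hP]
  exact (finite_Iio m).image _

theorem Infinite.ncard_firstElems (hP : P.Infinite) : (firstElems P m).ncard = m := by
  rw [firstElems_eq_image_nth hP,
    ncard_image_of_injective _ (Nat.nth_injective (p := (· ∈ P)) hP), ← Finset.coe_Iio,
    ncard_coe_finset, Nat.card_Iio]

theorem disjoint_gapsAboveSecond : Disjoint S (gapsAboveSecond S) :=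
  disjoint_left.2 fun _ hy hy' => hy'.1 hy

theorem gapsAboveSecond_eq_empty (h : S.ncard = 1) : gapsAboveSecond S = ∅ := by
  have hS : S.Finite := finite_of_ncard_pos (by omega)
  refine eq_empty_of_forall_notMem fun y ⟨_, hy⟩ => ?_
  have := Nat.count_le_card (p := (· ∈ S)) hS y
  rw [← ncard_eq_toFinset_card S hS] at this
  omega

theorem Finite.gapsAboveSecond_infinite (hS : S.Finite) (h : 1 < S.ncard) :
    (gapsAboveSecond S).Infinite := by
  obtain ⟨a, ha, b, hb, hab⟩ := (one_lt_ncard hS).1 h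
  obtain ⟨B, hB⟩ := hS.bddAbove
  refine (Ioi_infinite B).mono fun y (hy : B < y) => ⟨fun hyS => (hB hyS).not_gt hy, ?_⟩
  wlog hlt : a < b generalizing a b
  · exact this b hb a ha hab.symm (by omega)
  have hab := Nat.count_strict_mono (p := (· ∈ S)) ha hlt
  calc 2 ≤ Nat.count (· ∈ S) b + 1 := by omega
    _ ≤ Nat.count (· ∈ S) y := Nat.count_strict_mono hb ((hB hb).trans_lt hy)

end Set

section Computability

variable {α : Type*} [Primcodable α]

theorem Computable.nat_count {p : α → ℕ → Prop} [∀ a, DecidablePred (p a)]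
    (hp : Computable₂ fun a n => decide (p a n)) : Computable₂ fun a n => Nat.count (p a) n := by
  have hrec : Computable₂ fun a n =>
      Nat.rec (motive := fun _ => ℕ) 0 (fun i c => c + bif decide (p a i) then 1 else 0) n :=
    Computable.nat_rec Computable.snd (Computable.const 0) <| Computable.to₂ <|
      Primrec.nat_add.to_comp.comp (Computable.snd.comp Computable.snd) <|
        Computable.cond (hp.comp (Computable.fst.comp Computable.fst)
          (Computable.fst.comp Computable.snd)) (Computable.const 1) (Computable.const 0)
  refine hrec.of_eq fun ⟨a, n⟩ => ?_
  induction n with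
  | zero => rfl
  | succ n ih => simp_all [Nat.count_succ]

theorem Computable.decide_exists_lt {p : α → ℕ → Prop} [∀ a, DecidablePred (p a)]
    (hp : Computable₂ fun a n => decide (p a n)) :
    Computable₂ fun a n => decide (∃ i < n, p a i) :=
  ((Primrec.not.comp (Primrec.eq.decide.comp Primrec.id (Primrec.const 0))).to_comp.comp
    (Computable.nat_count hp)).of_eq fun ⟨a, n⟩ => by simp [← Nat.count_ne_iff_exists]

theorem Computable.decide_mem_firstElems {m : ℕ} {P : α → Set ℕ} [∀ a, DecidablePred (· ∈ P a)]
    (hP : Computable₂ fun a y => decide (y ∈ P a)) :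
    Computable₂ fun a y => decide (y ∈ (P a).firstElems m) :=
  (Primrec.and.to_comp.comp hP (Primrec.nat_lt.decide.to_comp.comp
    (Computable.nat_count (p := fun a y => y ∈ P a) hP) (Computable.const m))).of_eq fun _ => by
      rw [Bool.eq_iff_iff]
      simp only [Bool.and_eq_true, decide_eq_true_eq]
      rfl

theorem Computable.decide_mem_gapsAboveSecond {S : α → Set ℕ} [∀ a, DecidablePred (· ∈ S a)]
    (hS : Computable₂ fun a y => decide (y ∈ S a)) :
    Computable₂ fun a y => decide (y ∈ (S a).gapsAboveSecond) :=
  (Primrec.and.to_comp.comp (Primrec.not.to_comp.comp hS) (Primrec.nat_le.decide.to_comp.comp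
    (Computable.const 2) (Computable.nat_count (p := fun a y => y ∈ S a) hS))).of_eq fun _ => by
      rw [Bool.eq_iff_iff]
      simp only [Bool.and_eq_true, Bool.not_eq_true', decide_eq_false_iff_not, decide_eq_true_eq]
      rfl

end Computability

theorem List.exists_eq_append_cons_replicate_iff {α : Type*} {P : List α → α → Prop} {τ : List α}
    {a : α} : (∃ σ y n, P σ y ∧ τ = σ ++ y :: List.replicate n a) ↔
      ∃ i < τ.length, P (τ.take i) (τ.getD i a) ∧ ∀ x ∈ (τ.drop i).tail, x = a := by
  constructor
  · rintro ⟨σ, y, n, hP, rfl⟩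
    refine ⟨σ.length, by simp, ?_, fun x hx => ?_⟩
    · simpa using hP
    · rw [List.drop_left' rfl] at hx
      exact List.eq_of_mem_replicate hx
  · rintro ⟨i, hi, hP, hzero⟩
    refine ⟨_, _, τ.length - (i + 1), hP, ?_⟩
    rw [List.getD_eq_getElem _ _ hi, ← List.eq_replicate_iff.2 ⟨by simp, hzero⟩,
      List.drop_eq_getElem_cons hi, List.tail_cons, ← List.drop_eq_getElem_cons hi,
      List.take_append_drop]

section Trees

variable {T : Set (List ℕ)}

theorem isSubtree_of_append_singleton_mem (hT : ∀ σ x, σ ++ [x] ∈ T → σ ∈ T) : IsSubtree T := by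
  rintro _ hσ τ ⟨ρ, rfl⟩
  induction ρ using List.reverseRecOn with
  | nil => simpa using hσ
  | append_singleton ρ x ih => exact ih (hT _ x (by simpa using hσ))

theorem IsSubtree.length_le_of_prefix (hT : IsSubtree T) {σ σ' L : List ℕ} {y : ℕ}
    (hσ' : σ' ∈ T) (hy : σ ++ [y] ∉ T) (hσL : σ ++ [y] <+: L) (hσ'L : σ' <+: L) :
    σ'.length ≤ σ.length := by
  by_contra! hlt
  exact hy (hT σ' hσ' _ (List.prefix_of_prefix_length_le hσL hσ'L (by simpa using hlt)))

theorem IsSubtree.eq_of_append_cons_eq (hT : IsSubtree T) {σ σ' ρ ρ' : List ℕ} {y y' : ℕ}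
    (hσ : σ ∈ T) (hσ' : σ' ∈ T) (hy : σ ++ [y] ∉ T) (hy' : σ' ++ [y'] ∉ T)
    (h : σ ++ y :: ρ = σ' ++ y' :: ρ') : σ = σ' ∧ y = y' ∧ ρ = ρ' := by
  have hpre : σ ++ [y] <+: σ' ++ y' :: ρ' := h ▸ ⟨ρ, by simp⟩
  have hpre' : σ' ++ [y'] <+: σ ++ y :: ρ := h ▸ ⟨ρ', by simp⟩
  have hlen := le_antisymm
    (hT.length_le_of_prefix hσ' hy hpre (List.prefix_append _ _))
    (hT.length_le_of_prefix hσ hy' hpre' (List.prefix_append _ _))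
  obtain ⟨rfl, hcons⟩ := List.append_inj h hlen.symm
  simpa using hcons

end Trees

instance {T : Set (List ℕ)} [DecidablePred (· ∈ T)] (σ : List ℕ) :
    DecidablePred (· ∈ succSet T σ) :=
  fun x => inferInstanceAs (Decidable (σ ++ [x] ∈ T))

section PadTree

open Set

variable (T : Set (List ℕ)) [DecidablePred (· ∈ T)] (m : ℕ)

def padChildren (σ : List ℕ) : Set ℕ :=
  (gapsAboveSecond (succSet T σ)).firstElems m

instance (σ : List ℕ) : DecidablePred (· ∈ padChildren T m σ) :=
  inferInstanceAs (DecidablePred (· ∈ (gapsAboveSecond (succSet T σ)).firstElems m))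

def padTree : Set (List ℕ) :=
  {τ | τ ∈ T ∨ ∃ σ y n, (σ ∈ T ∧ y ∈ padChildren T m σ) ∧ τ = σ ++ y :: List.replicate n 0}

variable {T m}

theorem append_notMem_of_mem_padChildren {σ : List ℕ} {y : ℕ} (hy : y ∈ padChildren T m σ) :
    σ ++ [y] ∉ T :=
  (firstElems_subset hy).1

theorem subset_padTree : T ⊆ padTree T m := fun _ => Or.inl

theorem isSubtree_padTree (hT : IsSubtree T) : IsSubtree (padTree T m) := by
  refine isSubtree_of_append_singleton_mem fun τ x hτx => ?_
  rcases hτx with hτx | ⟨σ, y, n, hσy, heq⟩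
  · exact Or.inl (hT _ hτx τ (List.prefix_append _ _))
  cases n with
  | zero =>
    rw [List.append_inj_left' heq rfl]
    exact Or.inl hσy.1
  | succ n =>
    rw [List.replicate_succ', ← List.cons_append, ← List.append_assoc] at heq
    exact Or.inr ⟨σ, y, n, hσy, List.append_inj_left' heq rfl⟩

theorem succSet_padTree_of_mem (hT : IsSubtree T) {σ : List ℕ} (hσ : σ ∈ T) :
    succSet (padTree T m) σ = succSet T σ ∪ padChildren T m σ := by
  ext x
  constructor
  · rintro (hx | ⟨σ', y, n, ⟨hσ', hy⟩, heq⟩)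
    · exact Or.inl hx
    by_cases hx : σ ++ [x] ∈ T
    · exact Or.inl hx
    obtain ⟨rfl, rfl, -⟩ := hT.eq_of_append_cons_eq hσ hσ' hx
      (append_notMem_of_mem_padChildren hy) heq
    exact Or.inr hy
  · rintro (hx | hx)
    · exact Or.inl hx
    · exact Or.inr ⟨σ, x, 0, ⟨hσ, hx⟩, rfl⟩

theorem succSet_padTree_of_notMem (hT : IsSubtree T) {τ : List ℕ}
    (hτ : τ ∈ padTree T m) (hτT : τ ∉ T) : succSet (padTree T m) τ = {0} := by
  obtain hτ | ⟨σ, y, n, ⟨hσ, hy⟩, rfl⟩ := hτ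
  · exact absurd hτ hτT
  ext x
  constructor
  · rintro (hx | ⟨σ', y', n', ⟨hσ', hy'⟩, heq⟩)
    · exact absurd (hT _ hx _ (List.prefix_append _ _)) hτT
    rw [List.append_assoc, List.cons_append] at heq
    obtain ⟨-, -, hrep⟩ := hT.eq_of_append_cons_eq hσ hσ'
      (append_notMem_of_mem_padChildren hy) (append_notMem_of_mem_padChildren hy') heq
    exact List.eq_of_mem_replicate (hrep ▸ List.mem_append_right _ (List.mem_singleton_self x))
  · rintro rfl
    exact Or.inr ⟨σ, y, n + 1, ⟨hσ, hy⟩, by simp [List.replicate_succ']⟩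

theorem padChildren_eq_empty {σ : List ℕ} (h : (succSet T σ).ncard = 1) :
    padChildren T m σ = ∅ :=
  subset_empty_iff.1 (firstElems_subset.trans (gapsAboveSecond_eq_empty h).subset)

theorem ncard_succSet_union_padChildren {σ : List ℕ} (hfin : (succSet T σ).Finite)
    (h : 1 < (succSet T σ).ncard) :
    (succSet T σ ∪ padChildren T m σ).ncard = (succSet T σ).ncard + m := by
  have hinf := hfin.gapsAboveSecond_infinite h
  rw [padChildren, ncard_union_eq (disjoint_gapsAboveSecond.mono_right firstElems_subset) hfin
    hinf.finite_firstElems, hinf.ncard_firstElems]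

theorem isBranchingTree_padTree {s : ℕ} (hT : IsBranchingTree s T) (hs : 2 ≤ s) :
    IsBranchingTree (s + m) (padTree T m) := by
  refine ⟨isSubtree_padTree hT.1, fun τ hτ => ?_⟩
  by_cases hτT : τ ∈ T
  · rw [succSet_padTree_of_mem hT.1 hτT]
    rcases hT.2 τ hτT with h1 | hsucc
    · rw [padChildren_eq_empty h1, union_empty]
      exact Or.inl h1
    · have hfin : (succSet T τ).Finite := finite_of_ncard_pos (by omega)
      rw [ncard_succSet_union_padChildren hfin (by omega), hsucc]
      exact Or.inr rfl
  · rw [succSet_padTree_of_notMem hT.1 hτ hτT, ncard_singleton]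
    exact Or.inl rfl

theorem Computable.decide_mem_padChildren (hT : Computable fun τ => decide (τ ∈ T)) :
    Computable₂ fun σ y => decide (y ∈ padChildren T m σ) :=
  Computable.decide_mem_firstElems (P := fun σ => gapsAboveSecond (succSet T σ)) <|
    Computable.decide_mem_gapsAboveSecond (S := succSet T) <|
    hT.comp₂ Computable.list_concat

theorem mem_padTree_iff {τ : List ℕ} : τ ∈ padTree T m ↔ τ ∈ T ∨
    ∃ i < τ.length, (τ.take i ∈ T ∧ τ.getD i 0 ∈ padChildren T m (τ.take i)) ∧
      ∀ x ∈ (τ.drop i).tail, x = 0 :=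
  or_congr_right List.exists_eq_append_cons_replicate_iff

theorem computableTree_padTree (hT : Computable fun τ => decide (τ ∈ T)) :
    ComputableTree (padTree T m) := by
  have hzero : Computable₂ fun (τ : List ℕ) (i : ℕ) => decide (∀ x ∈ (τ.drop i).tail, x = 0) :=
    ((PrimrecPred.forall_mem_list (Primrec.eq.comp Primrec.id (Primrec.const 0))).decide.comp
      (Primrec.list_tail.comp (Primrec.list_drop.comp Primrec.snd Primrec.fst))).to_comp
  have htake : Computable₂ fun (τ : List ℕ) (i : ℕ) => τ.take i :=
    (Primrec.list_take.comp Primrec.snd Primrec.fst).to_comp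
  have hpadAt : Computable₂ fun (τ : List ℕ) (i : ℕ) =>
      decide ((τ.take i ∈ T ∧ τ.getD i 0 ∈ padChildren T m (τ.take i)) ∧
        ∀ x ∈ (τ.drop i).tail, x = 0) :=
    (Primrec.and.to_comp.comp (Primrec.and.to_comp.comp (hT.comp htake)
      ((hT.decide_mem_padChildren (m := m)).comp htake (Primrec.list_getD 0).to_comp))
      hzero).of_eq fun _ => by simp
  refine ComputablePred.of_eq (computablePred_iff_computable_decide.2 ?_)
    fun τ => mem_padTree_iff.symm
  exact (Primrec.or.to_comp.comp hT ((Computable.decide_exists_lt hpadAt).comp Computable.id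
    Computable.list_length)).of_eq fun _ => by simp

end PadTree

/-- for `k ≥ s ≥ 2`, every `k`-globally branch surviving function is
`s`-globally branch surviving. -/
theorem globally_branch_surviving_hierarchy (k s : ℕ) (hs : 2 ≤ s) (hsk : s ≤ k)
    (f : ℕ → ℕ)
    (hf : ∀ T : Set (List ℕ), IsBranchingTree k T → ComputableTree T →
      ¬ IsPathThrough f T) :
    ∀ T : Set (List ℕ), IsBranchingTree s T → ComputableTree T →
      ¬ IsPathThrough f T := by
  intro T hT ⟨_, hTc⟩ hpath
  obtain ⟨m, rfl⟩ := Nat.exists_eq_add_of_le hsk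
  exact hf (padTree T m) (isBranchingTree_padTree hT hs) (computableTree_padTree hTc)
    fun n => subset_padTree (hpath n)
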